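/- The map φ^(1) of Section 5 preserves both of its invariants: for all a, b, c, x, y, z, u, x₁ in ℂ with c·(x + y) − 1 ≠ 0, if (c·(x + y) − 1)·x₁ = a + b·(x + z) − c·(xy + yz + uy + zu) + 2y + u, then Π_l(x₁, x, y, z) = Π_l(x, y, z, u) and Π_h(x₁, x, y, z) = Π_h(x, y, z, u). -/
import Mathlib


/-- The lower invariant `Π_l` of the map `φ^(1)` of Section 5, in affine coordinates. -/
noncomputable def Pil (a b c x y z u : ℂ) : ℂ :=
  a * (y + z) + b * (y^2 + z^2) + c * (y + z) * (x*u - z*u - x*y - y*z)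
    - (x*u - z*u - x*y - 3*y*z)

/-- The higher invariant `Π_h` of the map `φ^(1)` of Section 5, in affine coordinates. -/
noncomputable def Pih (a b c x y z u : ℂ) : ℂ :=
  a * c * (u*y + z*u + x*y + x*z + 2*y*z) - a * (x + y + z + u)
    + b * c * (y + z) * (x + z) * (u + y) - b * (x + z) * (u + y)
    - c^2 * (u^2*y^2 + 2*u^2*y*z + u^2*z^2 + 2*u*y^2*z + 2*u*y*z^2 + x^2*y^2
        + 2*x^2*y*z + x^2*z^2 + 2*x*y^2*z + 2*x*y*z^2 + 2*y^2*z^2)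
    + 2 * c * (u^2*y + u^2*z + u*y^2 + 2*u*y*z + x^2*y + x^2*z + 2*x*y*z
        + x*z^2 + y^2*z + y*z^2)
    - (u^2 + 2*u*y + x^2 + 2*x*z + y^2 + z^2)

set_option maxHeartbeats 800000 in
/-- The map `φ^(1)` of Section 5 preserves both of its invariants `Π_l` and `Π_h`. -/
theorem phi1_preserves_both_invariants (a b c x y z u x₁ : ℂ)
    (h : c * (x + y) - 1 ≠ 0)
    (hrec : (c * (x + y) - 1) * x₁ =
      a + b * (x + z) - c * (x*y + y*z + u*y + z*u) + 2*y + u) :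
    Pil a b c x₁ x y z = Pil a b c x y z u ∧
    Pih a b c x₁ x y z = Pih a b c x y z u := by
  constructor
  · have key : (c * (x + y) - 1) * Pil a b c x₁ x y z
        = (c * (x + y) - 1) * Pil a b c x y z u := by
      simp only [Pil]
      linear_combination (- z + x + c*y*z + c*x*z - c*x*y - c*x^2) * hrec
    exact mul_left_cancel₀ h key
  · have h2 : (c * (x + y) - 1)^2 ≠ 0 := pow_ne_zero 2 h
    have key : (c * (x + y) - 1)^2 * Pih a b c x₁ x y z
        = (c * (x + y) - 1)^2 * Pih a b c x y z u := by
      simp only [Pih]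
      linear_combination (x₁ - u + c*z*u - 3*c*y*x₁ + 3*c*y*u + c*y*z - 3*c*x*x₁ + 2*c*x*u - c*x*y - 2*c^2*y*z*u + 3*c^2*y^2*x₁ - 3*c^2*y^2*u - 2*c^2*y^2*z - 2*c^2*x*z*u + 6*c^2*x*y*x₁ - 4*c^2*x*y*u - 2*c^2*x*y*z + 2*c^2*x*y^2 + 3*c^2*x^2*x₁ - c^2*x^2*u + 2*c^2*x^2*y + c^3*y^2*z*u - c^3*y^3*x₁ + c^3*y^3*u + c^3*y^3*z + 2*c^3*x*y*z*u - 3*c^3*x*y^2*x₁ + 2*c^3*x*y^2*u + 2*c^3*x*y^2*z - c^3*x*y^3 + c^3*x^2*z*u - 3*c^3*x^2*y*x₁ + c^3*x^2*y*u + c^3*x^2*y*z - 2*c^3*x^2*y^2 - c^3*x^3*x₁ - c^3*x^3*y) * hrec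
    exact mul_left_cancel₀ h2 key
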